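/- arXiv:2005.11795 — 4 statements merged into one kernel-verified Lean document; each statement's English description precedes it below -/
import Mathlib

section
/- Let G be a finite bipartite weighted graph with an A-saturating matching, bottleneck edge e* with weight w*, and define w⁻ as the bottleneck value of the subgraph G⁻ obtained by deleting both endpoints of e*, and w⁺ as the bottleneck value of G⁺ = G minus the single edge e* (assuming both subgraphs admit saturating matchings). Let Δ = (1/2)·min(w* − w⁻, w⁺ − w*). Then for any perturbation δ: E → ℝ with |δ(e)| ≤ Δ for all edges e, the edge e* is still a bottleneck edge of the perturbed graph with weights w + δ; that is, e* achieves the maximum weight in some optimal perturbed A-saturating matching, and no A-saturating matching in the perturbed graph has maximum weight strictly less than w(e*) + δ(e*). -/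
/-- A matching of a bipartite graph with agent part `A`, task part `T`, and
edge set `E`, saturating `A`: an injective assignment `m : A → T` using only edges of `E`. -/
def IsMatching {A T : Type*} (E : Finset (A × T)) (m : A → T) : Prop :=
  Function.Injective m ∧ ∀ a, (a, m a) ∈ E

/-- A matching of the subgraph `G⁻` obtained by deleting both endpoints of the edge `e`
(and all incident edges), saturating `A \ {e.1}`. -/
def IsMatchingMinus {A T : Type*} (E : Finset (A × T)) (e : A × T)
    (m : {a : A // a ≠ e.1} → T) : Prop :=
  Function.Injective m ∧ ∀ a : {a : A // a ≠ e.1}, m a ≠ e.2 ∧ (a.1, m a) ∈ E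

/-- `v` is the bottleneck value of the graph: some `A`-saturating matching has maximum
edge weight `v`, and every `A`-saturating matching has maximum edge weight at least `v`. -/
def IsBtlVal {A T : Type*} (E : Finset (A × T)) (w : A × T → ℝ) (v : ℝ) : Prop :=
  (∃ m : A → T, IsMatching E m ∧ (∀ a, w (a, m a) ≤ v) ∧ ∃ a, w (a, m a) = v) ∧
  ∀ m : A → T, IsMatching E m → ∃ a, v ≤ w (a, m a)

/-- `e` is a bottleneck edge: it is the maximum-weight edge of some `A`-saturating matching,
and every `A`-saturating matching contains an edge of weight at least `w e`. -/
def IsBtlEdge {A T : Type*} (E : Finset (A × T)) (w : A × T → ℝ) (e : A × T) : Prop :=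
  (∃ m : A → T, IsMatching E m ∧ m e.1 = e.2 ∧ ∀ a, w (a, m a) ≤ w e) ∧
  ∀ m : A → T, IsMatching E m → ∃ a, w e ≤ w (a, m a)

/-- `v` is the bottleneck value of the subgraph `G⁻` (endpoints of `e` deleted). -/
def IsBtlValMinus {A T : Type*} (E : Finset (A × T)) (w : A × T → ℝ) (e : A × T)
    (v : ℝ) : Prop :=
  (∃ m, IsMatchingMinus E e m ∧ (∀ a, w (a.1, m a) ≤ v) ∧ ∃ a, w (a.1, m a) = v) ∧
  ∀ m, IsMatchingMinus E e m → ∃ a, v ≤ w (a.1, m a)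

/-- Theorem 2 of the paper: with `wm` the bottleneck value of `G⁻`, `wp` that
of `G⁺`, and `0 ≤ Δ ≤ (1/2)·min(w e − wm, wp − w e)`, any perturbation `δ` with
`|δ x| ≤ Δ` for all edges keeps `e` a bottleneck edge of the perturbed graph. -/
theorem robust_bottleneck {A T : Type*} [Fintype A] [Fintype T] [DecidableEq A] [DecidableEq T]
    (E : Finset (A × T)) (w : A × T → ℝ) (e : A × T) (he : e ∈ E)
    (hbe : IsBtlEdge E w e)
    (wm wp : ℝ)
    (hwm : IsBtlValMinus E w e wm)
    (hwp : IsBtlVal (E.erase e) w wp)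
    (Δ : ℝ) (hΔ0 : 0 ≤ Δ) (hΔ : Δ ≤ min (w e - wm) (wp - w e) / 2)
    (δ : A × T → ℝ) (hδ : ∀ x, |δ x| ≤ Δ) :
    IsBtlEdge E (fun x => w x + δ x) e := by
  obtain ⟨⟨mm, ⟨hmminj, hmmE⟩, hmmle, -⟩, -⟩ := hwm
  obtain ⟨-, hwp2⟩ := hwp
  have h1 : 2 * Δ ≤ w e - wm := by
    have := min_le_left (w e - wm) (wp - w e); linarith
  have h2 : 2 * Δ ≤ wp - w e := by
    have := min_le_right (w e - wm) (wp - w e); linarith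
  have hδe1 : -Δ ≤ δ e := (abs_le.mp (hδ e)).1
  have hδe2 : δ e ≤ Δ := (abs_le.mp (hδ e)).2
  constructor
  · refine ⟨fun a => if h : a = e.1 then e.2 else mm ⟨a, h⟩, ⟨?_, ?_⟩, by simp, ?_⟩
    · intro x y hxy
      simp only at hxy
      by_cases hx : x = e.1 <;> by_cases hy : y = e.1
      · rw [hx, hy]
      · rw [dif_pos hx, dif_neg hy] at hxy
        exact absurd hxy.symm (hmmE ⟨y, hy⟩).1
      · rw [dif_neg hx, dif_pos hy] at hxy
        exact absurd hxy (hmmE ⟨x, hx⟩).1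
      · rw [dif_neg hx, dif_neg hy] at hxy
        simpa using congrArg Subtype.val (hmminj hxy)
    · intro a
      by_cases h : a = e.1
      · simpa [h] using he
      · simpa [h] using (hmmE ⟨a, h⟩).2
    · intro a
      by_cases h : a = e.1
      · simp [h]
      · simp only [dif_neg h]
        have := hmmle ⟨a, h⟩
        have := (abs_le.mp (hδ (a, mm ⟨a, h⟩))).2
        linarith
  · rintro m ⟨hminj, hmE⟩
    by_cases hme : m e.1 = e.2
    · exact ⟨e.1, by simp [hme]⟩
    · have hmatch : IsMatching (E.erase e) m := by
        refine ⟨hminj, fun a => Finset.mem_erase.mpr ⟨?_, hmE a⟩⟩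
        intro h
        obtain ⟨h1, h2⟩ := Prod.ext_iff.mp h
        exact hme (h1 ▸ h2)
      obtain ⟨a, ha⟩ := hwp2 m hmatch
      have := (abs_le.mp (hδ (a, m a))).1
      exact ⟨a, by simp only; linarith⟩
end

section
/- Let G be a finite bipartite weighted graph with bottleneck edge e* of weight w* and with G⁻ (delete endpoints of e*) having bottleneck value w⁻, and suppose the graph G⁺ = G ∖ {e*} admits no A-saturating matching (e* is in every A-saturating matching). Then for any perturbation δ with |δ(e)| ≤ (1/2)(w* − w⁻) for all e, the edge e* remains a bottleneck edge of the perturbed graph. -/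
/-- Theorem 2, degenerate case: if `G⁺ = G ∖ {e}` admits no `A`-saturating
matching, then any perturbation `δ` with `|δ x| ≤ (1/2)(w e − wm)` keeps `e` a
bottleneck edge of the perturbed graph. -/
theorem robust_bottleneck_no_plus {A T : Type*} [Fintype A] [Fintype T]
    [DecidableEq A] [DecidableEq T]
    (E : Finset (A × T)) (w : A × T → ℝ) (e : A × T) (he : e ∈ E)
    (hbe : IsBtlEdge E w e)
    (wm : ℝ) (hwm : IsBtlValMinus E w e wm)
    (hplus : ¬ ∃ m : A → T, IsMatching (E.erase e) m)
    (δ : A × T → ℝ) (hδ : ∀ x, |δ x| ≤ (w e - wm) / 2) :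
    IsBtlEdge E (fun x => w x + δ x) e := by
  have hδe := abs_le.1 (hδ e)
  have hwle : wm ≤ w e := by
    have := abs_nonneg (δ e)
    have := hδ e
    linarith
  -- every matching of E uses edge e
  have huse : ∀ m : A → T, IsMatching E m → m e.1 = e.2 := by
    intro m hm
    by_contra h
    exact hplus ⟨m, hm.1, fun a => Finset.mem_erase.2
      ⟨fun hae => h (by rw [← hae]), hm.2 a⟩⟩
  obtain ⟨⟨m0, hm0, hle0, _⟩, _⟩ := hwm
  constructor
  · refine ⟨fun a => if h : a = e.1 then e.2 else m0 ⟨a, h⟩, ⟨?_, ?_⟩, ?_⟩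
    · intro a b hab
      dsimp only at hab
      by_cases ha : a = e.1 <;> by_cases hb : b = e.1
      · rw [ha, hb]
      · rw [dif_pos ha, dif_neg hb] at hab
        exact absurd hab.symm (hm0.2 ⟨b, hb⟩).1
      · rw [dif_neg ha, dif_pos hb] at hab
        exact absurd hab (hm0.2 ⟨a, ha⟩).1
      · rw [dif_neg ha, dif_neg hb] at hab
        exact Subtype.mk_eq_mk.1 (hm0.1 hab)
    · intro a
      by_cases ha : a = e.1
      · simp only [ha, dif_pos]
        exact (Prod.mk.eta (p := e)) ▸ he
      · simp only [ha, dif_neg]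
        exact (hm0.2 ⟨a, ha⟩).2
    · refine ⟨?_, ?_⟩
      · simp
      · intro a
        by_cases ha : a = e.1
        · subst ha
          simp
        · simp only [dif_neg ha]
          have h1 := hle0 ⟨a, ha⟩
          have h2 := abs_le.1 (hδ (a, m0 ⟨a, ha⟩))
          linarith [h2.1, h2.2, hδe.1]
  · intro m hm
    exact ⟨e.1, by rw [huse m hm]⟩
end

section
/- Let G be a finite bipartite weighted graph with bottleneck edge e* of weight w*, and suppose every edge other than e* has weight distinct from w*. Define Δ⁺ = (1/2)·min{|w(j) − w*| : w(j) > w*} and Δ⁻ = (1/2)·min{|w(j) − w*| : w(j) < w*} (each taken as +∞ if the corresponding set is empty). Suppose a perturbation δ satisfies: δ(j) > (w* + Δ⁺) − w(j) for all edges j with w(j) > w*; δ(j) < (w* − Δ⁻) − w(j) for all edges j with w(j) < w*; and −Δ⁻ < δ(e*) < Δ⁺. Then for every edge x, w(x)+δ(x) > w(e*)+δ(e*) iff w(x) > w*, and w(x)+δ(x) < w(e*)+δ(e*) iff w(x) < w*; consequently e* remains a bottleneck edge of the perturbed graph. -/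
/-- `Δ⁺ = (1/2)·min{|w j − w e| : j ∈ E, w j > w e}`, as an extended real (`⊤` if the set
of edges above the bottleneck is empty). -/
noncomputable def DeltaPlus {A T : Type*} (E : Finset (A × T)) (w : A × T → ℝ)
    (e : A × T) : EReal :=
  (E.filter fun x => w e < w x).inf fun x => ((|w x - w e| / 2 : ℝ) : EReal)

/-- `Δ⁻ = (1/2)·min{|w j − w e| : j ∈ E, w j < w e}`, as an extended real (`⊤` if the set
of edges below the bottleneck is empty). -/
noncomputable def DeltaMinus {A T : Type*} (E : Finset (A × T)) (w : A × T → ℝ)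
    (e : A × T) : EReal :=
  (E.filter fun x => w x < w e).inf fun x => ((|w x - w e| / 2 : ℝ) : EReal)

/-- correctness of Algorithm 3, the Naive Algorithm for Robustness:
perturbations within the half-space bounds built from `Δ⁺` and `Δ⁻` preserve the strict
order of every edge relative to the bottleneck edge `e`, and hence `e` remains a
bottleneck edge of the perturbed graph. -/
theorem naive_robustness {A T : Type*} [Fintype A] [Fintype T]
    (E : Finset (A × T)) (w : A × T → ℝ) (e : A × T) (he : e ∈ E)
    (hbe : IsBtlEdge E w e)
    (huniq : ∀ x ∈ E, x ≠ e → w x ≠ w e)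
    (δ : A × T → ℝ)
    (hup : ∀ j ∈ E, w e < w j →
      ((w e : EReal) + DeltaPlus E w e) - (w j : ℝ) < (δ j : ℝ))
    (hlo : ∀ j ∈ E, w j < w e →
      (δ j : ℝ) < ((w e : EReal) - DeltaMinus E w e) - (w j : ℝ))
    (hstar : -(DeltaMinus E w e) < (δ e : ℝ) ∧ (δ e : ℝ) < DeltaPlus E w e) :
    (∀ x ∈ E,
      (w x + δ x > w e + δ e ↔ w x > w e) ∧ (w x + δ x < w e + δ e ↔ w x < w e)) ∧
    IsBtlEdge E (fun x => w x + δ x) e := by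

  have key : ∀ x ∈ E, (w e < w x → w e + δ e < w x + δ x) ∧
      (w x < w e → w x + δ x < w e + δ e) := by
    intro x hx
    constructor
    · intro hgt
      have hxf : x ∈ E.filter fun y => w e < w y := Finset.mem_filter.mpr ⟨hx, hgt⟩
      obtain ⟨x0, hx0, heq⟩ := Finset.exists_mem_eq_inf (E.filter fun y => w e < w y)
        ⟨x, hxf⟩ (fun y => ((|w y - w e| / 2 : ℝ) : EReal))
      have hΔ : DeltaPlus E w e = ((|w x0 - w e| / 2 : ℝ) : EReal) := heq
      have h1 : δ e < |w x0 - w e| / 2 := by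
        have := hstar.2
        rw [hΔ] at this
        exact_mod_cast this
      have h2 : w e + |w x0 - w e| / 2 - w x < δ x := by
        have := hup x hx hgt
        rw [hΔ, ← EReal.coe_add, ← EReal.coe_sub] at this
        exact_mod_cast this
      linarith
    · intro hlt
      have hxf : x ∈ E.filter fun y => w y < w e := Finset.mem_filter.mpr ⟨hx, hlt⟩
      obtain ⟨x0, hx0, heq⟩ := Finset.exists_mem_eq_inf (E.filter fun y => w y < w e)
        ⟨x, hxf⟩ (fun y => ((|w y - w e| / 2 : ℝ) : EReal))
      have hΔ : DeltaMinus E w e = ((|w x0 - w e| / 2 : ℝ) : EReal) := heq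
      have h1 : -(|w x0 - w e| / 2) < δ e := by
        have := hstar.1
        rw [hΔ, ← EReal.coe_neg] at this
        exact_mod_cast this
      have h2 : δ x < w e - |w x0 - w e| / 2 - w x := by
        have := hlo x hx hlt
        rw [hΔ, ← EReal.coe_sub, ← EReal.coe_sub] at this
        exact_mod_cast this
      linarith
  have hiff : ∀ x ∈ E,
      (w x + δ x > w e + δ e ↔ w x > w e) ∧ (w x + δ x < w e + δ e ↔ w x < w e) := by
    intro x hx
    rcases eq_or_ne x e with rfl | hne
    · simp
    · rcases lt_or_gt_of_ne (huniq x hx hne) with hlt | hgt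
      · have h := (key x hx).2 hlt
        exact ⟨⟨fun h' => by linarith, fun h' => by linarith⟩,
               ⟨fun _ => hlt, fun _ => h⟩⟩
      · have h := (key x hx).1 hgt
        exact ⟨⟨fun _ => hgt, fun _ => h⟩,
               ⟨fun h' => by linarith, fun h' => by linarith⟩⟩
  refine ⟨hiff, ?_, ?_⟩
  · obtain ⟨⟨m, hm, hme, hmax⟩, _⟩ := hbe
    refine ⟨m, hm, hme, fun a => ?_⟩
    have hmem : (a, m a) ∈ E := hm.2 a
    by_contra h
    push_neg at h
    have h2 := ((hiff _ hmem).1).mp h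
    linarith [hmax a]
  · intro m hm
    obtain ⟨a, ha⟩ := hbe.2 m hm
    refine ⟨a, ?_⟩
    have hmem := hm.2 a
    by_contra h
    push_neg at h
    have h2 := ((hiff _ hmem).2).mp h
    linarith
end

section
/- Let G be a finite bipartite weighted graph with bottleneck edge e* of weight w*, bottleneck value w⁻ of G⁻ (endpoints of e* deleted), and bottleneck value w⁺ of G⁺ = G∖{e*} (assume both exist). Let Δ⁺ = (w⁺ − w*)/2 and Δ⁻ = (w* − w⁻)/2. Suppose the perturbation δ satisfies: for edges j with w(j) ≥ w⁺, δ(j) > (w* + Δ⁺) − w(j); for edges j with w(j) ≤ w⁻, δ(j) < (w* − Δ⁻) − w(j); for e*, −Δ⁻ ≤ δ(e*) ≤ Δ⁺ where Δ = min(Δ⁺, Δ⁻); and δ is arbitrary on all other edges j ∉ {e*} with w⁻ < w(j) < w⁺. Then e* remains a bottleneck edge of the perturbed graph. -/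
/-- correctness of Algorithm 2, the Relaxed Δ Algorithm: with `wm`, `wp` the
bottleneck values of `G⁻` and `G⁺`, `Δ⁺ = (wp − w e)/2`, `Δ⁻ = (w e − wm)/2`, a
perturbation that keeps edges of weight `≥ wp` above `w e + Δ⁺`, edges of weight `≤ wm`
below `w e − Δ⁻`, perturbs `e` within `[−Δ⁻, Δ⁺]`, and is arbitrary on the remaining
edges, keeps `e` a bottleneck edge of the perturbed graph. -/
theorem relaxed_robustness {A T : Type*} [Fintype A] [Fintype T]
    [DecidableEq A] [DecidableEq T]
    (E : Finset (A × T)) (w : A × T → ℝ) (e : A × T) (he : e ∈ E)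
    (hbe : IsBtlEdge E w e)
    (wm wp : ℝ)
    (hwm : IsBtlValMinus E w e wm)
    (hwp : IsBtlVal (E.erase e) w wp)
    (δ : A × T → ℝ)
    (hup : ∀ j ∈ E, j ≠ e → wp ≤ w j → (w e + (wp - w e) / 2) - w j < δ j)
    (hlo : ∀ j ∈ E, j ≠ e → w j ≤ wm → δ j < (w e - (w e - wm) / 2) - w j)
    (hstar : -((w e - wm) / 2) ≤ δ e ∧ δ e ≤ (wp - w e) / 2) :
    IsBtlEdge E (fun x => w x + δ x) e := by
  obtain ⟨⟨mm, ⟨hminj, hmE⟩, hmle, _⟩, _⟩ := hwm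
  constructor
  · refine ⟨fun a => if h : a = e.1 then e.2 else mm ⟨a, h⟩, ⟨?_, ?_⟩, ?_, ?_⟩
    · intro a b hab
      by_cases ha : a = e.1 <;> by_cases hb : b = e.1 <;>
        simp only [ha, hb, dif_pos, dif_neg, not_false_iff] at hab
      · rw [ha, hb]
      · exact absurd hab.symm (hmE ⟨b, hb⟩).1
      · exact absurd hab (hmE ⟨a, ha⟩).1
      · exact congrArg Subtype.val (hminj hab)
    · intro a
      by_cases ha : a = e.1
      · simpa [ha] using he
      · simpa [ha] using (hmE ⟨a, ha⟩).2
    · simp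
    · intro a
      by_cases ha : a = e.1
      · simp [ha]
      · simp only [dif_neg ha]
        have h1 := hlo (a, mm ⟨a, ha⟩) (hmE ⟨a, ha⟩).2
          (fun h => ha (congrArg Prod.fst h)) (hmle ⟨a, ha⟩)
        have h2 := hstar.1
        linarith
  · rintro m ⟨hinj, hE⟩
    by_cases h : m e.1 = e.2
    · exact ⟨e.1, by simp [h]⟩
    · have hmem : ∀ a, (a, m a) ∈ E.erase e := by
        intro a
        refine Finset.mem_erase.mpr ⟨?_, hE a⟩
        intro hc
        have h1 : a = e.1 := congrArg Prod.fst hc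
        exact h (by rw [← h1]; exact congrArg Prod.snd hc)
      obtain ⟨a, ha⟩ := hwp.2 m ⟨hinj, hmem⟩
      refine ⟨a, ?_⟩
      have h1 := hup (a, m a) (hE a)
        (fun hc => h (by rw [← congrArg Prod.fst hc]; exact congrArg Prod.snd hc)) ha
      have h2 := hstar.2
      simp only
      linarith
end
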